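/- arXiv:1608.02147 — 4 statements merged into one kernel-verified Lean document; each statement's English description precedes it below -/
import Mathlib

section
/- Let Γ be a strongly connected digraph, ℓ an embedded directed loop, and Γ' the digraph obtained by collapsing ℓ. Then there is a short exact sequence 0 → ℚ·ℓ → L(Γ) → L(Γ') → 0 of loop spaces; in particular dim L(Γ) = dim L(Γ') + 1. -/
open scoped Classical

/-- A digraph: a finite set of vertices and a finite (multi)set of directed edges,
each with a tail and a tip. Multiple edges and self-loops are allowed. -/
structure Digraph' where
  V : Type
  E : Type
  [fintypeV : Fintype V]
  [fintypeE : Fintype E]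
  tail : E → V
  tip : E → V

attribute [instance] Digraph'.fintypeV Digraph'.fintypeE

/-- One-step relation: there is an edge from `a` to `b`. -/
def Digraph'.Step (G : Digraph') (a b : G.V) : Prop :=
  ∃ e : G.E, G.tail e = a ∧ G.tip e = b

/-- Strong connectivity: for all vertices `x`, `y` there is a (nonempty) directed
path from `x` to `y`. -/
def Digraph'.StronglyConnected (G : Digraph') : Prop :=
  ∀ x y : G.V, Relation.TransGen G.Step x y

/-- An embedded directed loop with `n` edges. -/
def Digraph'.IsEmbeddedLoop (G : Digraph') {n : ℕ} [NeZero n] (e : ZMod n → G.E) : Prop :=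
  Function.Injective e ∧ Function.Injective (fun i => G.tail (e i)) ∧
    ∀ i, G.tip (e i) = G.tail (e (i + 1))

/-- The element of `ℚ^E` obtained from an embedded loop by summing its edges. -/
noncomputable def Digraph'.loopVec (G : Digraph') {n : ℕ} [NeZero n] (e : ZMod n → G.E) :
    G.E → ℚ :=
  Set.indicator (Set.range e) fun _ => (1 : ℚ)

/-- The loop space `L(Γ) ⊆ ℚ^E`. -/
noncomputable def Digraph'.loopSpace (G : Digraph') : Submodule ℚ (G.E → ℚ) :=
  Submodule.span ℚ
    {v | ∃ (n : ℕ) (_ : NeZero n) (e : ZMod n → G.E), G.IsEmbeddedLoop e ∧ v = G.loopVec e}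

/-- The set of vertices visited by a loop. -/
def Digraph'.loopVerts (G : Digraph') {n : ℕ} [NeZero n] (e : ZMod n → G.E) : Set G.V :=
  Set.range fun i => G.tail (e i)

/-- The digraph obtained by collapsing an embedded loop `e` to a single vertex. -/
noncomputable def Digraph'.collapse (G : Digraph') {n : ℕ} [NeZero n] (e : ZMod n → G.E) :
    Digraph' where
  V := Option {v : G.V // v ∉ G.loopVerts e}
  E := {f : G.E // f ∉ Set.range e}
  tail := fun f =>
    if h : G.tail f.1 ∈ G.loopVerts e then none else some ⟨G.tail f.1, h⟩
  tip := fun f =>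
    if h : G.tip f.1 ∈ G.loopVerts e then none else some ⟨G.tip f.1, h⟩

/-- The linear map `ℚ^E → ℚ^{E'}` induced by the quotient map on edges (restriction to
the edges not in the collapsed loop). -/
noncomputable def Digraph'.collapseMap (G : Digraph') {n : ℕ} [NeZero n] (e : ZMod n → G.E) :
    (G.E → ℚ) →ₗ[ℚ] ((G.collapse e).E → ℚ) :=
  LinearMap.funLeft ℚ ℚ fun f => f.1

/-! The loop space is the cycle space `ker ∂` of the incidence map `∂ : ℚ^E → ℚ^V`. A
nonnegative cycle contains an embedded loop in its support, and subtracting the right multiple of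
that loop shrinks the support; strong connectivity gives a cycle that is `≥ 1` on every edge, so
every cycle is a difference of nonnegative ones.

Collapsing `ℓ` intertwines `∂` with the pushforward along the quotient map on vertices, so it
maps cycles to cycles. A cycle of `Γ'`, extended by zero, has boundary supported on the vertices
of `ℓ` with total sum zero. The sum-zero vectors of `ℚ^(ℤ/k)` are exactly the image of the
cyclic difference operator `D c = (c (i - 1) - c i)ᵢ`, and `∂ (∑ cᵢ ℓᵢ)` is `D c` placed on
the vertices of `ℓ`; so a combination of edges of `ℓ` corrects the extension to a cycle. A cycle
killed by the collapse lives on `ℓ` with `D` of its coefficients zero, hence constant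
coefficients: it is a multiple of `ℓ`. The dimension formula is then rank–nullity. -/

theorem Function.Injective.sum_pi_single_apply {ι α M : Type*} [Fintype ι]
    [DecidableEq α] [AddCommMonoid M] {v : ι → α} (hv : Function.Injective v) (d : ι → M)
    (j : ι) : (∑ i, Pi.single (v i) (d i) : α → M) (v j) = d j := by
  rw [Finset.sum_apply, Fintype.sum_eq_single j fun i hi => Pi.single_eq_of_ne (hv.ne hi).symm _,
    Pi.single_eq_same]

theorem Function.Injective.eq_sum_pi_single {ι α M : Type*} [Fintype ι]
    [DecidableEq α] [AddCommMonoid M] {v : ι → α} (hv : Function.Injective v) {x : α → M}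
    (hx : ∀ a ∉ Set.range v, x a = 0) : x = ∑ i, Pi.single (v i) (x (v i)) := by
  funext a
  by_cases ha : a ∈ Set.range v
  · obtain ⟨j, rfl⟩ := ha
    rw [hv.sum_pi_single_apply]
  · rw [hx a ha, Finset.sum_apply]
    exact (Finset.sum_eq_zero fun i _ => Pi.single_eq_of_ne (fun h => ha ⟨i, h.symm⟩) _).symm

theorem Finite.exists_mem_periodicPts {α : Type*} [Finite α] (σ : α → α) (x : α) :
    ∃ w, w ∈ Function.periodicPts σ := by
  obtain ⟨a, b, hab, hrep⟩ := Finite.exists_ne_map_eq_of_infinite fun m => σ^[m] x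
  wlog h : a < b generalizing a b
  · exact this b a hab.symm hrep.symm (hab.lt_or_gt.resolve_left h)
  refine ⟨σ^[a] x, b - a, by omega, ?_⟩
  rw [Function.IsPeriodicPt, Function.IsFixedPt, ← Function.iterate_add_apply,
    Nat.sub_add_cancel h.le, hrep]

theorem Submodule.finrank_map_add_finrank_inf_ker {K V W : Type*} [DivisionRing K]
    [AddCommGroup V] [Module K V] [AddCommGroup W] [Module K W] (f : V →ₗ[K] W)
    (L : Submodule K V) [FiniteDimensional K L] :
    Module.finrank K (L.map f) + Module.finrank K ↥(L ⊓ LinearMap.ker f) =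
      Module.finrank K L := by
  have hker : (L ⊓ LinearMap.ker f).comap L.subtype = LinearMap.ker (f.domRestrict L) := by
    ext x
    simp
  rw [← LinearMap.range_domRestrict, ← (Submodule.comapSubtypeEquivOfLe inf_le_left).finrank_eq,
    hker, (f.domRestrict L).finrank_range_add_finrank_ker]

section CyclicDifference

variable (K : Type*) [Field K] (k : ℕ)

noncomputable def cyclicDiff : (ZMod k → K) →ₗ[K] (ZMod k → K) :=
  LinearMap.funLeft K K (· - 1) - LinearMap.id

variable {K k}

theorem cyclicDiff_apply (c : ZMod k → K) (i : ZMod k) : cyclicDiff K k c i = c (i - 1) - c i :=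
  rfl

theorem ZMod.eq_apply_zero_of_apply_sub_one_eq {α : Type*} [NeZero k] {c : ZMod k → α}
    (hc : ∀ i, c (i - 1) = c i) (i : ZMod k) : c i = c 0 := by
  obtain ⟨m, rfl⟩ := ZMod.natCast_zmod_surjective i
  induction m with
  | zero => simp
  | succ m ih => rw [← hc, Nat.cast_succ, add_sub_cancel_right, ih]

variable [NeZero k]

theorem ker_cyclicDiff : LinearMap.ker (cyclicDiff K k) = K ∙ fun _ => 1 := by
  ext c
  rw [LinearMap.mem_ker, Submodule.mem_span_singleton]
  constructor
  · intro hc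
    refine ⟨c 0, funext fun i => ?_⟩
    have h := ZMod.eq_apply_zero_of_apply_sub_one_eq
      (fun i => sub_eq_zero.1 (congrFun hc i)) i
    simp [h]
  · rintro ⟨a, rfl⟩
    ext i
    simp [cyclicDiff_apply]

theorem mem_range_cyclicDiff_iff {b : ZMod k → K} :
    b ∈ LinearMap.range (cyclicDiff K k) ↔ ∑ i, b i = 0 := by
  let total : (ZMod k → K) →ₗ[K] K := Fintype.linearCombination K fun _ => 1
  have htotal (c : ZMod k → K) : total c = ∑ i, c i := by
    simp [total, Fintype.linearCombination_apply]
  suffices LinearMap.range (cyclicDiff K k) = LinearMap.ker total by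
    rw [this, LinearMap.mem_ker, htotal]
  have hle : LinearMap.range (cyclicDiff K k) ≤ LinearMap.ker total := by
    rintro _ ⟨c, rfl⟩
    rw [LinearMap.mem_ker, htotal]
    simp only [cyclicDiff_apply, Finset.sum_sub_distrib, sub_eq_zero]
    exact Fintype.sum_equiv (Equiv.subRight 1) _ _ fun _ => rfl
  refine Submodule.eq_of_le_of_finrank_eq hle ?_
  have hD := LinearMap.finrank_range_add_finrank_ker (cyclicDiff K k)
  have htot := LinearMap.finrank_range_add_finrank_ker total
  have htop : LinearMap.range total = ⊤ :=
    LinearMap.range_eq_top.2 fun a => ⟨Pi.single 0 a, by simp [htotal]⟩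
  rw [ker_cyclicDiff, finrank_span_singleton fun h => one_ne_zero (congrFun h 0)] at hD
  rw [htop, finrank_top, Module.finrank_self] at htot
  omega

end CyclicDifference

namespace Digraph'

variable (G : Digraph')

noncomputable def boundary : (G.E → ℚ) →ₗ[ℚ] (G.V → ℚ) :=
  Fintype.linearCombination ℚ fun f => Pi.single (G.tip f) 1 - Pi.single (G.tail f) 1

variable {G}

theorem boundary_single (f : G.E) (a : ℚ) :
    G.boundary (Pi.single f a) = Pi.single (G.tip f) a - Pi.single (G.tail f) a := by
  rw [boundary, Fintype.linearCombination_apply_single, smul_sub, ← Pi.single_smul',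
    ← Pi.single_smul', smul_eq_mul, mul_one]

theorem boundary_apply (x : G.E → ℚ) (v : G.V) :
    G.boundary x v = ∑ f with G.tip f = v, x f - ∑ f with G.tail f = v, x f := by
  simp [boundary, Fintype.linearCombination_apply, Pi.single_apply, Finset.sum_sub_distrib,
    Finset.sum_ite, mul_sub, eq_comm]

section EmbeddedLoop

variable {k : ℕ} [NeZero k] {e : ZMod k → G.E}

theorem boundary_sum_single_loop (he : G.IsEmbeddedLoop e) (c : ZMod k → ℚ) :
    G.boundary (∑ i, Pi.single (e i) (c i)) =
      ∑ i, Pi.single (G.tail (e i)) (cyclicDiff ℚ k c i) := by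
  simp only [map_sum, boundary_single, he.2.2, Finset.sum_sub_distrib, cyclicDiff_apply,
    Pi.single_sub]
  congr 1
  exact Fintype.sum_equiv (Equiv.addRight 1) _ _ fun i => by simp

theorem loopVec_eq_sum (hinj : Function.Injective e) :
    G.loopVec e = ∑ i, Pi.single (e i) 1 := by
  refine (hinj.eq_sum_pi_single fun f hf => Set.indicator_of_notMem hf _).trans ?_
  simp

theorem boundary_loopVec (he : G.IsEmbeddedLoop e) : G.boundary (G.loopVec e) = 0 := by
  rw [loopVec_eq_sum he.1, boundary_sum_single_loop he]
  simp [cyclicDiff_apply]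

end EmbeddedLoop

theorem loopVec_mem_loopSpace {n : ℕ} [NeZero n] {e : ZMod n → G.E} (he : G.IsEmbeddedLoop e) :
    G.loopVec e ∈ G.loopSpace :=
  Submodule.subset_span ⟨n, inferInstance, e, he, rfl⟩

theorem loopSpace_le_ker_boundary : G.loopSpace ≤ LinearMap.ker G.boundary := by
  rw [loopSpace, Submodule.span_le]
  rintro _ ⟨n, _, e, he, rfl⟩
  exact boundary_loopVec he

theorem exists_tail_eq_tip_pos {x : G.E → ℚ} (hx : G.boundary x = 0) (hnn : 0 ≤ x) {f : G.E}
    (hf : 0 < x f) : ∃ g, G.tail g = G.tip f ∧ 0 < x g := by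
  have hflow := congrFun hx (G.tip f)
  rw [boundary_apply, Pi.zero_apply, sub_eq_zero] at hflow
  have hout : 0 < ∑ g with G.tail g = G.tip f, x g := by
    rw [← hflow]
    exact Finset.sum_pos' (fun g _ => hnn g) ⟨f, by simp, hf⟩
  by_contra! hno
  exact hout.not_ge (Finset.sum_nonpos fun g hg => hno g (Finset.mem_filter.1 hg).2)

theorem exists_isEmbeddedLoop_pos {x : G.E → ℚ} (hx : G.boundary x = 0) (hnn : 0 ≤ x)
    {f : G.E} (hf : 0 < x f) :
    ∃ (n : ℕ) (_ : NeZero n) (e : ZMod n → G.E),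
      G.IsEmbeddedLoop e ∧ ∀ i, 0 < x (e i) := by
  -- Follow, from each vertex with a positive outgoing edge, one such edge: conservation of flow
  -- makes this a self-map of those vertices, and a periodic orbit of it is an embedded loop.
  let S := {v : G.V // ∃ g, G.tail g = v ∧ 0 < x g}
  choose out hout using fun v : S => v.2
  let σ : S → S := fun v => ⟨G.tip (out v), exists_tail_eq_tip_pos hx hnn (hout v).2⟩
  obtain ⟨w, hw⟩ := Finite.exists_mem_periodicPts σ ⟨_, f, rfl, hf⟩
  set n := Function.minimalPeriod σ w
  have : NeZero n := ⟨(Function.minimalPeriod_pos_of_mem_periodicPts hw).ne'⟩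
  have htail : Function.Injective fun i : ZMod n => G.tail (out (σ^[i.val] w)) := by
    intro i j hij
    simp only [(hout _).1] at hij
    exact ZMod.val_injective n (Function.iterate_injOn_Iio_minimalPeriod (ZMod.val_lt i)
      (ZMod.val_lt j) (Subtype.ext hij))
  refine ⟨n, inferInstance, fun i => out (σ^[i.val] w), ⟨htail.of_comp, htail, fun i => ?_⟩,
    fun i => (hout _).2⟩
  simp only [(hout _).1]
  rw [ZMod.val_add, ZMod.val_one_eq_one_mod, Nat.add_mod_mod,
    Function.iterate_mod_minimalPeriod_eq, Function.iterate_succ_apply']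

theorem exists_isEmbeddedLoop_sub_smul_loopVec {x : G.E → ℚ} (hx : G.boundary x = 0)
    (hnn : 0 ≤ x) (hx0 : x ≠ 0) :
    ∃ (n : ℕ) (_ : NeZero n) (e : ZMod n → G.E) (a : ℚ), G.IsEmbeddedLoop e ∧
      0 ≤ x - a • G.loopVec e ∧
      Finset.univ.filter ((x - a • G.loopVec e) · ≠ 0) ⊂
        Finset.univ.filter (x · ≠ 0) := by
  obtain ⟨f, hf⟩ := Function.ne_iff.1 hx0
  obtain ⟨n, _, e, he, hpos⟩ := exists_isEmbeddedLoop_pos hx hnn ((hnn f).lt_of_ne' hf)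
  obtain ⟨j, -, hj⟩ :=
    Finset.exists_min_image Finset.univ (fun i => x (e i)) Finset.univ_nonempty
  -- Subtracting the loop with the least weight on it kills that edge and keeps `x` nonnegative.
  have hloop (i : ZMod n) : (x - x (e j) • G.loopVec e) (e i) = x (e i) - x (e j) := by
    simp [loopVec]
  have hoff {g : G.E} (hg : g ∉ Set.range e) : (x - x (e j) • G.loopVec e) g = x g := by
    simp [loopVec, Set.indicator_of_notMem hg]
  refine ⟨n, inferInstance, e, x (e j), he, fun g => ?_, ?_⟩
  · by_cases hg : g ∈ Set.range e
    · obtain ⟨i, rfl⟩ := hg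
      rw [hloop, Pi.zero_apply, sub_nonneg]
      exact hj i (Finset.mem_univ i)
    · rw [hoff hg]
      exact hnn g
  refine Finset.ssubset_iff_of_subset (fun g => ?_) |>.2 ⟨e j, ?_, ?_⟩
  · simp only [Finset.mem_filter, Finset.mem_univ, true_and]
    by_cases hg : g ∈ Set.range e
    · obtain ⟨i, rfl⟩ := hg
      exact fun _ => (hpos i).ne'
    · rw [hoff hg]
      exact id
  · simpa using (hpos j).ne'
  · simp only [Finset.mem_filter, Finset.mem_univ, true_and, hloop, sub_self, ne_eq,
      not_true_eq_false, not_false_eq_true]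

theorem mem_loopSpace_of_nonneg {x : G.E → ℚ} (hx : G.boundary x = 0) (hnn : 0 ≤ x) :
    x ∈ G.loopSpace := by
  induction hs : (Finset.univ.filter (x · ≠ 0)).card using Nat.strong_induction_on
    generalizing x with
  | _ s ih =>
  by_cases hx0 : x = 0
  · rw [hx0]
    exact zero_mem _
  obtain ⟨n, _, e, a, he, hnn', hsupp⟩ := exists_isEmbeddedLoop_sub_smul_loopVec hx hnn hx0
  have hx' : G.boundary (x - a • G.loopVec e) = 0 := by
    simp [hx, boundary_loopVec he]
  have hmem := ih _ (hs ▸ Finset.card_lt_card hsupp) hx' hnn' rfl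
  simpa using add_mem hmem (Submodule.smul_mem _ a (loopVec_mem_loopSpace he))

theorem ker_boundary_le_loopSpace {p : G.E → ℚ} (hp : G.boundary p = 0)
    (hp1 : ∀ f, 1 ≤ p f) :
    LinearMap.ker G.boundary ≤ G.loopSpace := by
  intro x hx
  rw [LinearMap.mem_ker] at hx
  set M := ∑ f, |x f|
  have hshift : 0 ≤ x + M • p := fun f => by
    have hM : |x f| ≤ M :=
      Finset.single_le_sum (fun g _ => abs_nonneg (x g)) (Finset.mem_univ f)
    have hMp : M ≤ M * p f := le_mul_of_one_le_right ((abs_nonneg _).trans hM) (hp1 f)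
    simp only [Pi.zero_apply, Pi.add_apply, Pi.smul_apply, smul_eq_mul]
    linarith [neg_abs_le (x f)]
  have hp0 : 0 ≤ p := fun f => zero_le_one.trans (hp1 f)
  rw [show x = (x + M • p) - M • p by abel]
  exact sub_mem (mem_loopSpace_of_nonneg (by simp [hx, hp]) hshift)
    (Submodule.smul_mem _ _ (mem_loopSpace_of_nonneg hp hp0))

theorem loopSpace_eq_ker_boundary {p : G.E → ℚ} (hp : G.boundary p = 0)
    (hp1 : ∀ f, 1 ≤ p f) :
    G.loopSpace = LinearMap.ker G.boundary :=
  le_antisymm loopSpace_le_ker_boundary (ker_boundary_le_loopSpace hp hp1)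

theorem exists_nonneg_boundary_eq_of_transGen {a b : G.V} (h : Relation.TransGen G.Step a b) :
    ∃ w : G.E → ℚ, 0 ≤ w ∧ G.boundary w = Pi.single b 1 - Pi.single a 1 := by
  induction h with
  | single hab =>
    obtain ⟨g, rfl, rfl⟩ := hab
    exact ⟨Pi.single g 1, Pi.single_nonneg.2 zero_le_one, boundary_single g 1⟩
  | tail _ hbc ih =>
    obtain ⟨w, hw, hbw⟩ := ih
    obtain ⟨g, rfl, rfl⟩ := hbc
    refine ⟨w + Pi.single g 1, add_nonneg hw (Pi.single_nonneg.2 zero_le_one), ?_⟩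
    rw [map_add, hbw, boundary_single]
    abel

theorem StronglyConnected.exists_one_le_mem_ker_boundary (hG : G.StronglyConnected) :
    ∃ p : G.E → ℚ, G.boundary p = 0 ∧ ∀ f, 1 ≤ p f := by
  choose w hw hbw using fun f => exists_nonneg_boundary_eq_of_transGen (hG (G.tip f) (G.tail f))
  refine ⟨∑ f, (w f + Pi.single f 1), ?_, fun f => ?_⟩
  · simp [hbw, boundary_single]
  · have hterm (g : G.E) : 0 ≤ w g f + (Pi.single g 1 : G.E → ℚ) f :=
      add_nonneg (hw g f) (by by_cases h : f = g <;> simp [h])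
    calc (1 : ℚ) ≤ w f f + (Pi.single f 1 : G.E → ℚ) f := by simpa using hw f f
      _ ≤ ∑ g, (w g f + (Pi.single g 1 : G.E → ℚ) f) :=
        Finset.single_le_sum (fun g _ => hterm g) (Finset.mem_univ f)
      _ = (∑ g, (w g + Pi.single g 1) : G.E → ℚ) f := by simp

section Collapse

variable {k : ℕ} [NeZero k] {e : ZMod k → G.E}

variable (e) in
noncomputable def collapseVertex (v : G.V) : (G.collapse e).V :=
  if h : v ∈ G.loopVerts e then none else some ⟨v, h⟩

variable (e) in
noncomputable def collapsePushforward : (G.V → ℚ) →ₗ[ℚ] ((G.collapse e).V → ℚ) :=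
  Fintype.linearCombination ℚ fun v => Pi.single (G.collapseVertex e v) 1

theorem collapseVertex_eq_iff_of_notMem {v w : G.V} (hw : w ∉ G.loopVerts e) :
    G.collapseVertex e v = G.collapseVertex e w ↔ v = w := by
  -- `(G.collapse e).V` is this `Option` type only once `collapse` is unfolded, which `simp`
  -- does not do.
  show (dite _ (fun _ => none) (fun h => some ⟨v, h⟩) : Option {u // u ∉ G.loopVerts e}) =
    dite _ (fun _ => none) (fun h => some ⟨w, h⟩) ↔ v = w
  by_cases hv : v ∈ G.loopVerts e
  · simp only [dif_pos hv, dif_neg hw, reduceCtorEq, false_iff]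
    exact fun h => hw (h ▸ hv)
  · simp [hv, hw]

theorem collapseVertex_eq_iff_of_mem {v w : G.V} (hw : w ∈ G.loopVerts e) :
    G.collapseVertex e v = G.collapseVertex e w ↔ v ∈ G.loopVerts e := by
  show (dite _ (fun _ => none) (fun h => some ⟨v, h⟩) : Option {u // u ∉ G.loopVerts e}) =
    dite _ (fun _ => none) (fun h => some ⟨w, h⟩) ↔ v ∈ G.loopVerts e
  by_cases hv : v ∈ G.loopVerts e <;> simp [hv, hw]

theorem collapsePushforward_apply_of_notMem (b : G.V → ℚ) {w : G.V} (hw : w ∉ G.loopVerts e) :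
    G.collapsePushforward e b (G.collapseVertex e w) = b w := by
  rw [collapsePushforward, Fintype.linearCombination_apply, Finset.sum_apply,
    Fintype.sum_eq_single w]
  · simp
  · intro v hv
    simp [collapseVertex_eq_iff_of_notMem hw, hv]

theorem collapsePushforward_apply_of_mem (he : G.IsEmbeddedLoop e) (b : G.V → ℚ) {w : G.V}
    (hw : w ∈ G.loopVerts e) :
    G.collapsePushforward e b (G.collapseVertex e w) = ∑ i, b (G.tail (e i)) := by
  have hverts : Finset.univ.filter (· ∈ G.loopVerts e) = Finset.univ.map ⟨_, he.2.1⟩ := by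
    ext v
    simp [loopVerts]
  simp only [collapsePushforward, Fintype.linearCombination_apply, Finset.sum_apply,
    Pi.smul_apply, Pi.single_apply, eq_comm (a := G.collapseVertex e w),
    collapseVertex_eq_iff_of_mem hw, smul_eq_mul, mul_ite, mul_one, mul_zero]
  rw [← Finset.sum_filter, hverts, Finset.sum_map]
  rfl

theorem collapseMap_single_of_mem {f : G.E} (hf : f ∈ Set.range e) (a : ℚ) :
    G.collapseMap e (Pi.single f a) = 0 := by
  funext g
  have hg : g.1 ≠ f := fun h => g.2 (h ▸ hf)
  simp [collapseMap, hg]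

theorem collapseMap_single (g : (G.collapse e).E) (a : ℚ) :
    G.collapseMap e (Pi.single g.1 a) = Pi.single g a := by
  funext g'
  by_cases hg : g' = g
  · subst hg
    simp [collapseMap]
  · have hg' : g'.1 ≠ g.1 := fun h => hg (Subtype.ext h)
    simp [collapseMap, hg, hg']

theorem boundary_comp_collapseMap (he : G.IsEmbeddedLoop e) :
    (G.collapse e).boundary ∘ₗ G.collapseMap e = G.collapsePushforward e ∘ₗ G.boundary := by
  refine LinearMap.pi_ext fun f a => ?_
  simp only [LinearMap.comp_apply, boundary_single, map_sub, collapsePushforward,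
    Fintype.linearCombination_apply_single]
  by_cases hf : f ∈ Set.range e
  · obtain ⟨i, rfl⟩ := hf
    have htip : G.collapseVertex e (G.tip (e i)) = G.collapseVertex e (G.tail (e i)) :=
      (collapseVertex_eq_iff_of_mem ⟨i, rfl⟩).2 ⟨i + 1, (he.2.2 i).symm⟩
    rw [collapseMap_single_of_mem ⟨i, rfl⟩, map_zero, htip, sub_self]
  · obtain ⟨g, rfl⟩ : ∃ g : (G.collapse e).E, g.1 = f := ⟨⟨f, hf⟩, rfl⟩
    rw [collapseMap_single, boundary_single, ← Pi.single_smul', ← Pi.single_smul',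
      smul_eq_mul, mul_one]
    rfl

theorem collapseMap_loopVec : G.collapseMap e (G.loopVec e) = 0 := by
  funext g
  exact Set.indicator_of_notMem g.2 (fun _ => (1 : ℚ))

theorem ker_boundary_inf_ker_collapseMap (he : G.IsEmbeddedLoop e) :
    LinearMap.ker G.boundary ⊓ LinearMap.ker (G.collapseMap e) = ℚ ∙ G.loopVec e := by
  refine le_antisymm ?_ ?_
  · rintro x ⟨hbx, hπx⟩
    rw [SetLike.mem_coe, LinearMap.mem_ker] at hbx hπx
    have hx : x = ∑ i, Pi.single (e i) (x (e i)) :=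
      he.1.eq_sum_pi_single fun f hf => congrFun hπx ⟨f, hf⟩
    have hdiff : x ∘ e ∈ LinearMap.ker (cyclicDiff ℚ k) := by
      refine funext fun j => ?_
      have h := congrFun (boundary_sum_single_loop he (x ∘ e)) (G.tail (e j))
      rwa [Function.comp_def, ← hx, hbx, he.2.1.sum_pi_single_apply, eq_comm] at h
    rw [ker_cyclicDiff, Submodule.mem_span_singleton] at hdiff
    obtain ⟨a, ha⟩ := hdiff
    refine Submodule.mem_span_singleton.2 ⟨a, ?_⟩
    rw [hx, loopVec_eq_sum he.1, Finset.smul_sum]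
    refine Finset.sum_congr rfl fun i _ => ?_
    have hai : a = x (e i) := by simpa using congrFun ha i
    rw [← Pi.single_smul', smul_eq_mul, mul_one, hai]
  · rw [Submodule.span_le, Set.singleton_subset_iff]
    exact ⟨boundary_loopVec he, collapseMap_loopVec⟩

theorem map_collapseMap_ker_boundary (he : G.IsEmbeddedLoop e) :
    (LinearMap.ker G.boundary).map (G.collapseMap e) = LinearMap.ker (G.collapse e).boundary := by
  refine le_antisymm ?_ fun y hy => ?_
  · rintro _ ⟨x, hx, rfl⟩
    rw [SetLike.mem_coe, LinearMap.mem_ker] at hx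
    rw [LinearMap.mem_ker, ← LinearMap.comp_apply, boundary_comp_collapseMap he,
      LinearMap.comp_apply, hx, map_zero]
  rw [LinearMap.mem_ker] at hy
  set x₀ : G.E → ℚ := Function.extend Subtype.val y 0
  have hx₀ : G.collapseMap e x₀ = y := funext fun g => Subtype.val_injective.extend_apply y 0 g
  set b := G.boundary x₀
  have hb : G.collapsePushforward e b = 0 := by
    rw [← LinearMap.comp_apply, ← boundary_comp_collapseMap he, LinearMap.comp_apply, hx₀, hy]
  have hb_off : ∀ w ∉ G.loopVerts e, b w = 0 := fun w hw => by
    rw [← collapsePushforward_apply_of_notMem b hw, hb, Pi.zero_apply]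
  have hb_sum : ∑ i, b (G.tail (e i)) = 0 := by
    rw [← collapsePushforward_apply_of_mem he b ⟨0, rfl⟩, hb, Pi.zero_apply]
  obtain ⟨c, hc⟩ : -(b ∘ fun i => G.tail (e i)) ∈ LinearMap.range (cyclicDiff ℚ k) :=
    mem_range_cyclicDiff_iff.2 (by simp [hb_sum])
  refine ⟨x₀ + ∑ i, Pi.single (e i) (c i), ?_, ?_⟩
  · rw [SetLike.mem_coe, LinearMap.mem_ker, map_add, boundary_sum_single_loop he, hc]
    simp only [Pi.neg_apply, Function.comp_apply, Pi.single_neg, Finset.sum_neg_distrib]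
    rw [← he.2.1.eq_sum_pi_single hb_off, add_neg_cancel]
  · rw [map_add, hx₀, map_sum,
      Finset.sum_eq_zero fun i _ => collapseMap_single_of_mem ⟨i, rfl⟩ _, add_zero]

end Collapse

end Digraph'

/-- Collapsing an embedded loop `ℓ` of a strongly connected digraph `Γ` gives a short
exact sequence `0 → ℚ·ℓ → L(Γ) → L(Γ') → 0` of loop spaces: the induced map sends
`L(Γ)` onto `L(Γ')`, its kernel inside `L(Γ)` is spanned by the class of `ℓ` (and `ℓ`
does lie in `L(Γ)`); in particular `dim L(Γ) = dim L(Γ') + 1`. -/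
theorem collapse_loopSpace_exact (G : Digraph') (hG : G.StronglyConnected)
    {k : ℕ} [NeZero k] (e : ZMod k → G.E) (he : G.IsEmbeddedLoop e) :
    G.loopVec e ∈ G.loopSpace ∧
      Submodule.map (G.collapseMap e) G.loopSpace = (G.collapse e).loopSpace ∧
      G.loopSpace ⊓ LinearMap.ker (G.collapseMap e) = Submodule.span ℚ {G.loopVec e} ∧
      Module.finrank ℚ G.loopSpace = Module.finrank ℚ (G.collapse e).loopSpace + 1 := by
  obtain ⟨p, hp, hp1⟩ := hG.exists_one_le_mem_ker_boundary
  have hmap := Digraph'.map_collapseMap_ker_boundary he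
  have hker := Digraph'.ker_boundary_inf_ker_collapseMap he
  have hp' : G.collapseMap e p ∈ LinearMap.ker (G.collapse e).boundary :=
    hmap ▸ Submodule.mem_map_of_mem hp
  rw [Digraph'.loopSpace_eq_ker_boundary hp hp1,
    Digraph'.loopSpace_eq_ker_boundary hp' fun g => hp1 g.1, hmap, hker]
  refine ⟨Digraph'.boundary_loopVec he, rfl, rfl, ?_⟩
  have hne : G.loopVec e ≠ 0 := fun h => by
    simpa [Digraph'.loopVec] using congrFun h (e 0)
  rw [← Submodule.finrank_map_add_finrank_inf_ker (G.collapseMap e), hmap, hker,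
    finrank_span_singleton hne]
end

section
/- Fix rationals q₁/k, q₂/k with 0 < q₁/k < 1/2 and 0 < q₂/k < 1/2, and exponents ε₁, ε₂ ∈ {0,1} with at most one of them nonzero. Then the integral over ℂ of z^{ε₁}(z-1)^{ε₂} / (|z|^{2-2q₁/k} |z-1|^{2-2q₂/k}) with respect to Lebesgue area measure is nonzero (assuming the integrand is integrable). -/
/-!
Everything is read off the real part of the integral. For `ε₁ = ε₂ = 0` the integrand is
positive. For `ε₁ = 1` pair `z` with `-z` over the right half-plane: with `a = 2 - 2q₁`,
`b = 2 - 2q₂ > 0` the two contributions add up to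
`Re z / |z|^a * (|z - 1|^{-b} - |z + 1|^{-b}) > 0`, because `|z - 1| < |z + 1|` there.
The case `ε₂ = 1` is carried to this one by `z ↦ 1 - z`, which swaps the two exponents and
flips the sign.
-/

open MeasureTheory

lemma integral_pos_of_ae_pos {α : Type*} [MeasurableSpace α] {μ : Measure α} [NeZero μ]
    {f : α → ℝ} (hf : ∀ᵐ x ∂μ, 0 < f x) (hfi : Integrable f μ) :
    0 < ∫ x, f x ∂μ := by
  rw [integral_pos_iff_support_of_nonneg_ae (hf.mono fun _ hx => hx.le) hfi]
  refine pos_iff_ne_zero.2 fun h => ?_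
  obtain ⟨x, hx, hx0⟩ := (hf.and (measure_eq_zero_iff_ae_notMem.1 h)).exists
  exact hx0 hx.ne'

namespace Complex

lemma norm_sub_one_lt_norm_add_one {z : ℂ} (hz : 0 < z.re) : ‖z - 1‖ < ‖z + 1‖ := by
  rw [← sq_lt_sq₀ (norm_nonneg _) (norm_nonneg _), Complex.sq_norm, Complex.sq_norm,
    normSq_apply, normSq_apply]
  simp only [sub_re, sub_im, add_re, add_im, one_re, one_im]
  nlinarith

lemma volume_re_eq_zero : volume {z : ℂ | z.re = 0} = 0 := by
  have hker : {z : ℂ | z.re = 0} = (LinearMap.ker reLm : Set ℂ) := by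
    ext z; simp
  rw [hker]
  refine Measure.addHaar_submodule _ _ fun htop => ?_
  have h1 : (1 : ℂ) ∈ LinearMap.ker reLm := htop ▸ Submodule.mem_top
  simp at h1

lemma integral_eq_setIntegral_add_neg {E : Type*} [NormedAddCommGroup E] [NormedSpace ℝ E]
    {g : ℂ → E} (hg : Integrable g) :
    ∫ z, g z = ∫ z in {z : ℂ | 0 < z.re}, (g z + g (-z)) := by
  have hH : MeasurableSet {z : ℂ | 0 < z.re} := measurableSet_lt measurable_const measurable_re
  have hcompl : ({z : ℂ | 0 < z.re}ᶜ : Set ℂ) =ᵐ[volume] {z : ℂ | z.re < 0} := by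
    refine ae_eq_set.2 ⟨measure_mono_null (fun z hz => ?_) volume_re_eq_zero, ?_⟩
    · simp only [Set.mem_sdiff, Set.mem_compl_iff, Set.mem_ofPred_eq, not_lt] at hz
      exact le_antisymm hz.1 hz.2
    · refine measure_mono_null (fun z hz => ?_) measure_empty
      simp only [Set.mem_sdiff, Set.mem_compl_iff, Set.mem_ofPred_eq, not_not] at hz
      exact (lt_asymm hz.1 hz.2).elim
  have hneg : ∫ z in {z : ℂ | z.re < 0}, g z = ∫ z in {z : ℂ | 0 < z.re}, g (-z) := by
    rw [← (Measure.measurePreserving_neg volume).setIntegral_preimage_emb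
      (MeasurableEquiv.neg ℂ).measurableEmbedding]
    simp
  rw [integral_add hg.integrableOn hg.comp_neg.integrableOn, ← hneg,
    ← setIntegral_congr_set hcompl, integral_add_compl hH hg]

lemma re_div_add_re_neg_div_pos {a b : ℝ} (hb : 0 < b) {z : ℂ} (hz : 0 < z.re) (hz1 : z ≠ 1) :
    0 < z.re / (‖z‖ ^ a * ‖z - 1‖ ^ b) + (-z).re / (‖-z‖ ^ a * ‖-z - 1‖ ^ b) := by
  have hz0 : z ≠ 0 := by rintro rfl; simp at hz
  have hnorm : ‖-z - 1‖ = ‖z + 1‖ := by rw [show -z - 1 = -(z + 1) by ring, norm_neg]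
  rw [norm_neg, hnorm, neg_re, neg_div, ← sub_eq_add_neg, sub_pos]
  have hza : 0 < ‖z‖ ^ a := Real.rpow_pos_of_pos (norm_pos_iff.2 hz0) a
  have hz1b : 0 < ‖z - 1‖ ^ b := Real.rpow_pos_of_pos (norm_pos_iff.2 (sub_ne_zero.2 hz1)) b
  refine div_lt_div_of_pos_left hz (by positivity) (mul_lt_mul_of_pos_left ?_ hza)
  exact Real.rpow_lt_rpow (norm_nonneg _) (norm_sub_one_lt_norm_add_one hz) hb

lemma integral_re_div_pos (a : ℝ) {b : ℝ} (hb : 0 < b)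
    (hint : Integrable fun z : ℂ => z.re / (‖z‖ ^ a * ‖z - 1‖ ^ b)) :
    0 < ∫ z : ℂ, z.re / (‖z‖ ^ a * ‖z - 1‖ ^ b) := by
  have hH : IsOpen {z : ℂ | 0 < z.re} := isOpen_lt continuous_const continuous_re
  have : NeZero (volume.restrict {z : ℂ | 0 < z.re}) :=
    ⟨(Measure.restrict_eq_zero.not).2 (hH.measure_ne_zero volume ⟨1, by simp⟩)⟩
  rw [integral_eq_setIntegral_add_neg hint]
  refine integral_pos_of_ae_pos ?_ (hint.add hint.comp_neg).integrableOn
  filter_upwards [ae_restrict_mem hH.measurableSet, ae_restrict_of_ae (Measure.ae_ne volume 1)]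
    with z hz hz1
  exact re_div_add_re_neg_div_pos hb hz hz1

lemma integral_re_sub_one_div_neg {a : ℝ} (ha : 0 < a) (b : ℝ)
    (hint : Integrable fun z : ℂ => (z - 1).re / (‖z‖ ^ a * ‖z - 1‖ ^ b)) :
    ∫ z : ℂ, (z - 1).re / (‖z‖ ^ a * ‖z - 1‖ ^ b) < 0 := by
  have hreflect : ∀ z : ℂ, (1 - z - 1).re / (‖1 - z‖ ^ a * ‖1 - z - 1‖ ^ b) =
      -(z.re / (‖z‖ ^ b * ‖z - 1‖ ^ a)) := fun z => by
    rw [sub_sub_cancel_left, norm_neg, ← norm_neg (1 - z), neg_sub, neg_re, neg_div, mul_comm]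
  have hint' : Integrable fun z : ℂ => z.re / (‖z‖ ^ b * ‖z - 1‖ ^ a) := by
    simpa only [hreflect, neg_neg] using (hint.comp_sub_left 1).fun_neg
  rw [← integral_sub_left_eq_self _ volume 1]
  simp only [hreflect, integral_neg, neg_lt_zero]
  exact integral_re_div_pos b ha hint'

lemma integral_one_div_pos (a b : ℝ)
    (hint : Integrable fun z : ℂ => 1 / (‖z‖ ^ a * ‖z - 1‖ ^ b)) :
    0 < ∫ z : ℂ, 1 / (‖z‖ ^ a * ‖z - 1‖ ^ b) := by
  refine integral_pos_of_ae_pos ?_ hint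
  filter_upwards [Measure.ae_ne volume 0, Measure.ae_ne volume 1] with z hz0 hz1
  have hza : 0 < ‖z‖ ^ a := Real.rpow_pos_of_pos (norm_pos_iff.2 hz0) a
  have hz1b : 0 < ‖z - 1‖ ^ b := Real.rpow_pos_of_pos (norm_pos_iff.2 (sub_ne_zero.2 hz1)) b
  positivity

end Complex

theorem integral_ne_zero_general (q₁ q₂ : ℚ) (hq₁' : q₁ < 1/2)
    (hq₂' : q₂ < 1/2)
    (ε₁ ε₂ : ℕ) (hε₁ : ε₁ ≤ 1) (hε₂ : ε₂ ≤ 1) (hε : ε₁ * ε₂ = 0)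
    (f : ℂ → ℂ)
    (hf : ∀ z : ℂ, f z = z ^ ε₁ * (z - 1) ^ ε₂ /
      (((‖z‖ ^ ((2 : ℝ) - 2 * (q₁ : ℝ)) *
         ‖z - 1‖ ^ ((2 : ℝ) - 2 * (q₂ : ℝ)) : ℝ)) : ℂ))
    (hint : Integrable f) :
    ∫ z, f z ≠ 0 := by
  have hA : 0 < (2 : ℝ) - 2 * q₁ := by
    have : (0 : ℚ) < 2 - 2 * q₁ := by linarith
    exact_mod_cast this
  have hB : 0 < (2 : ℝ) - 2 * q₂ := by
    have : (0 : ℚ) < 2 - 2 * q₂ := by linarith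
    exact_mod_cast this
  have hre : ∀ z, (f z).re = (z ^ ε₁ * (z - 1) ^ ε₂).re /
      (‖z‖ ^ ((2 : ℝ) - 2 * q₁) * ‖z - 1‖ ^ ((2 : ℝ) - 2 * q₂)) := fun z => by
    rw [hf, Complex.div_ofReal_re]
  have hint_re : Integrable fun z => (f z).re := hint.re
  have h_re_integral : ∫ z, (f z).re = (∫ z, f z).re := integral_re hint
  simp only [hre] at hint_re h_re_integral
  intro h0
  rw [h0, Complex.zero_re] at h_re_integral
  interval_cases ε₁ <;> interval_cases ε₂
  · simp only [pow_zero, mul_one, Complex.one_re] at hint_re h_re_integral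
    exact (Complex.integral_one_div_pos _ _ hint_re).ne' h_re_integral
  · simp only [pow_zero, pow_one, one_mul] at hint_re h_re_integral
    exact (Complex.integral_re_sub_one_div_neg hA _ hint_re).ne h_re_integral
  · simp only [pow_zero, pow_one, mul_one] at hint_re h_re_integral
    exact (Complex.integral_re_div_pos _ hB hint_re).ne' h_re_integral
  · simp at hε

/-- For rationals `0 < q₁ < 1/2`, `0 < q₂ < 1/2` and exponents `ε₁, ε₂ ∈ {0,1}` with at
most one of them nonzero, the integral over `ℂ` of
`z^ε₁ (z-1)^ε₂ / (|z|^{2-2q₁} |z-1|^{2-2q₂})` with respect to Lebesgue area measure is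
nonzero (assuming the integrand is integrable). -/
theorem integral_ne_zero (q₁ q₂ : ℚ) (hq₁ : 0 < q₁) (hq₁' : q₁ < 1/2)
    (hq₂ : 0 < q₂) (hq₂' : q₂ < 1/2)
    (ε₁ ε₂ : ℕ) (hε₁ : ε₁ ≤ 1) (hε₂ : ε₂ ≤ 1) (hε : ε₁ * ε₂ = 0)
    (f : ℂ → ℂ)
    (hf : ∀ z : ℂ, f z = z ^ ε₁ * (z - 1) ^ ε₂ /
      (((‖z‖ ^ ((2 : ℝ) - 2 * (q₁ : ℝ)) *
         ‖z - 1‖ ^ ((2 : ℝ) - 2 * (q₂ : ℝ)) : ℝ)) : ℂ))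
    (hint : Integrable f) :
    ∫ z, f z ≠ 0 :=
  integral_ne_zero_general q₁ q₂ hq₁' hq₂' ε₁ ε₂ hε₁ hε₂ hε f hf hint
end

section
/- Let n = 3 and k ≥ 3 with positive integers q₁,q₂,q₃ < k summing to k, tᵢ(ℓ) = {ℓqᵢ/k}, t(ℓ) = t₁(ℓ)+t₂(ℓ)+t₃(ℓ). If a, b ∈ ℤ/k satisfy a + b ≡ 2 (mod k), t(-a) > 1, and t(-b) > 1, then t(-a) = t(-b) = 2. -/
open Finset

lemma t_int_two (k : ℕ) (hk : 3 ≤ k) (q : Fin 3 → ℕ) (hsum : ∑ i, q i = k)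
    (x : ℤ) (hx : 1 < ∑ i, Int.fract ((x : ℝ) * (q i : ℝ) / (k : ℝ))) :
    (∑ i, Int.fract ((x : ℝ) * (q i : ℝ) / (k : ℝ))) = 2 := by
  have hk0 : (k : ℝ) ≠ 0 := by positivity
  have hsum' : ∑ i, (x : ℝ) * (q i : ℝ) / (k : ℝ) = (x : ℝ) := by
    rw [← Finset.sum_div, ← Finset.mul_sum]
    have : ∑ i, ((q i : ℝ)) = (k : ℝ) := by exact_mod_cast congrArg (Nat.cast : ℕ → ℝ) hsum
    rw [this]
    field_simp
  set N : ℤ := ∑ i, ⌊(x : ℝ) * (q i : ℝ) / (k : ℝ)⌋ with hN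
  have key : (∑ i, Int.fract ((x : ℝ) * (q i : ℝ) / (k : ℝ))) = ((x - N : ℤ) : ℝ) := by
    simp only [Int.fract, Finset.sum_sub_distrib, hsum']
    push_cast [hN]
    ring
  have hlt : (∑ i, Int.fract ((x : ℝ) * (q i : ℝ) / (k : ℝ))) < 3 := by
    have : (∑ i, Int.fract ((x : ℝ) * (q i : ℝ) / (k : ℝ))) < ∑ _i : Fin 3, (1 : ℝ) :=
      Finset.sum_lt_sum_of_nonempty ⟨0, Finset.mem_univ 0⟩
        (fun i _ => Int.fract_lt_one _)
    simpa using this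
  rw [key] at hx hlt ⊢
  have h1 : (1 : ℤ) < x - N := by exact_mod_cast hx
  have h2 : x - N < 3 := by exact_mod_cast hlt
  have : x - N = 2 := by omega
  rw [this]; norm_num

/-- For `n = 3`: with positive `q₁,q₂,q₃ < k` summing to `k` (`k ≥ 3`),
`tᵢ(ℓ) = {ℓ qᵢ/k}`, `t(ℓ) = Σᵢ tᵢ(ℓ)`: if `a + b ≡ 2 (mod k)`, `t(-a) > 1` and
`t(-b) > 1`, then `t(-a) = t(-b) = 2`. -/
theorem t_eq_two (k : ℕ) (hk : 3 ≤ k) (q : Fin 3 → ℕ)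
    (hq0 : ∀ i, 0 < q i) (hqk : ∀ i, q i < k) (hsum : ∑ i, q i = k)
    (a b : ℤ) (hab : a + b ≡ 2 [ZMOD (k : ℤ)])
    (ha : 1 < ∑ i, Int.fract (((-a : ℤ) : ℝ) * (q i : ℝ) / (k : ℝ)))
    (hb : 1 < ∑ i, Int.fract (((-b : ℤ) : ℝ) * (q i : ℝ) / (k : ℝ))) :
    (∑ i, Int.fract (((-a : ℤ) : ℝ) * (q i : ℝ) / (k : ℝ))) = 2 ∧
      (∑ i, Int.fract (((-b : ℤ) : ℝ) * (q i : ℝ) / (k : ℝ))) = 2 := by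
  exact ⟨t_int_two k hk q hsum (-a) ha, t_int_two k hk q hsum (-b) hb⟩
end

section
/- Let k be an odd prime. For each primitive root r mod k, let a_r ∈ (ℤ/k)* solve a(2-a)^{-1} ≡ r and set q₁ = (k-1)(-a_r)^{-1} mod k, q₂ = (k-1)(-(2-a_r))^{-1} mod k, q₃ = k - q₁ - q₂ mod k. Then for all sufficiently large primes k, there exists a primitive root r mod k such that q₁, q₂, q₃ are nonzero and pairwise distinct. -/
/-!
Write `x` for the primitive root. The equation `a (2 - a)⁻¹ = x` has the solution
`a = 2x / (1 + x)` as soon as `x ≠ -1`, and since `k - 1 ≡ -1` the residues become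
`q₁ = (1 + x) / 2x`, `q₂ = (1 + x) / 2`, `q₃ = -(1 + x)² / 2x`. They are nonzero and pairwise
distinct unless `x ∈ {1, -1, -2, -1/2}`. No primitive root squares to `1` once `k > 3`, and there
are `φ(k - 1) ≥ 3` primitive roots once `k ≥ 8`, so some primitive root also avoids `-2` and `-1/2`.
-/

namespace Nat

theorem totient_le_totient_of_dvd {m n : ℕ} (h : m ∣ n) (hn : 0 < n) : φ m ≤ φ n :=
  Nat.le_of_dvd (totient_pos.mpr hn) (totient_dvd_of_dvd h)

theorem dvd_twelve_of_totient_le_two {n : ℕ} (hn : 0 < n) (h : φ n ≤ 2) : n ∣ 12 := by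
  refine (dvd_iff_prime_pow_dvd_dvd 12 n).mpr fun p e hp hpe => ?_
  obtain _ | f := e
  · simp
  have hφ : p ^ f * (p - 1) ≤ 2 :=
    totient_prime_pow_succ hp f ▸ (totient_le_totient_of_dvd hpe hn).trans h
  have hp3 : p ≤ 3 := by
    have := (Nat.le_mul_of_pos_left _ (pow_pos hp.pos f)).trans hφ
    omega
  have hf : f < p ^ f := Nat.lt_pow_self hp.one_lt
  have := hp.two_le
  interval_cases p
  · obtain rfl | rfl : f = 0 ∨ f = 1 := by omega
    all_goals norm_num
  · obtain rfl : f = 0 := by omega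
    norm_num

theorem three_le_totient {n : ℕ} (hn : 7 ≤ n) : 3 ≤ φ n := by
  by_contra! h
  have h12 := dvd_twelve_of_totient_le_two (n := n) (by omega) (by omega)
  obtain rfl : n = 12 := by
    have := Nat.le_of_dvd (by norm_num) h12
    interval_cases n <;> simp_all
  exact absurd h (by decide)

end Nat

open Finset Nat

theorem mem_zpowers_of_orderOf_eq_card {G : Type*} [Group G] [Fintype G] {g : G}
    (hg : orderOf g = Fintype.card G) (x : G) : x ∈ Subgroup.zpowers g := by
  have : Subgroup.zpowers g = ⊤ := Subgroup.eq_top_of_card_eq _ <| by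
    rw [Nat.card_zpowers, hg, Nat.card_eq_fintype_card]
  exact this ▸ Subgroup.mem_top x

theorem IsCyclic.exists_orderOf_eq_card_and_notMem {G α : Type*} [Group G] [Fintype G]
    [IsCyclic G] {f : G → α} (hf : Function.Injective f) {s : Finset α}
    (hs : #s < Nat.totient (Fintype.card G)) :
    ∃ g : G, orderOf g = Fintype.card G ∧ f g ∉ s := by
  classical
  by_contra! h
  have := card_le_card_of_injOn f (s := {g : G | orderOf g = Fintype.card G})
    (fun g hg => h g (mem_filter.mp hg).2) hf.injOn
  rw [IsCyclic.card_orderOf_eq_totient dvd_rfl] at this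
  omega

section Field

variable {F : Type*} [Field F]

theorem exists_mul_inv_two_sub_eq (h2 : (2 : F) ≠ 0) {x : F} (hx : x ≠ -1) :
    ∃ a : F, 2 - a ≠ 0 ∧ a * (2 - a)⁻¹ = x := by
  have hx1 : 1 + x ≠ 0 := fun h => hx (by linear_combination h)
  have h2a : 2 - 2 * x / (1 + x) = 2 / (1 + x) := by field_simp; ring
  refine ⟨2 * x / (1 + x), ?_, ?_⟩
  · rw [h2a]; exact div_ne_zero h2 hx1
  · rw [h2a]; field_simp

theorem q_ne_zero_and_pairwise_ne (h2 : (2 : F) ≠ 0) {c a x : F} (hc : c ≠ 0) (ha : a ≠ 0)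
    (ha2 : 2 - a ≠ 0) (hax : a * (2 - a)⁻¹ = x) (hx1 : x ≠ 1) (hx2 : x ≠ -2)
    (hx2' : x ≠ (-2)⁻¹) :
    let q₁ := c * (-a)⁻¹
    let q₂ := c * (-(2 - a))⁻¹
    let q₃ := -(q₁ + q₂)
    q₁ ≠ 0 ∧ q₂ ≠ 0 ∧ q₃ ≠ 0 ∧ q₁ ≠ q₂ ∧ q₁ ≠ q₃ ∧ q₂ ≠ q₃ := by
  dsimp only
  subst hax
  refine ⟨mul_ne_zero hc (inv_ne_zero (neg_ne_zero.mpr ha)),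
    mul_ne_zero hc (inv_ne_zero (neg_ne_zero.mpr ha2)), fun h => ?_, fun h => ?_,
    fun h => ?_, fun h => ?_⟩
  · field_simp at h
    exact mul_ne_zero hc h2 (by linear_combination h)
  · have : a = 2 - a := neg_injective (inv_injective (mul_left_cancel₀ hc h))
    exact hx1 (by rw [← this, mul_inv_cancel₀ ha])
  · field_simp at h
    exact hx2 (by field_simp; linear_combination -h)
  · field_simp at h
    exact hx2' (by field_simp; linear_combination -h)

end Field

theorem ZMod.natCast_ne_zero_of_lt {n k : ℕ} (h0 : 0 < n) (h : n < k) : (n : ZMod k) ≠ 0 := by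
  rw [Ne, ZMod.natCast_eq_zero_iff]
  exact Nat.not_dvd_of_pos_of_lt h0 h

/-- For all sufficiently large primes `k` there is a primitive root `r` mod `k` such
that, with `a` solving `a (2-a)⁻¹ ≡ r (mod k)` and `q₁ = (k-1)(-a)⁻¹`,
`q₂ = (k-1)(-(2-a))⁻¹`, `q₃ = k - q₁ - q₂` (mod `k`), the residues `q₁, q₂, q₃` are
nonzero and pairwise distinct. -/
theorem exists_primitive_root_q_distinct :
    ∃ N : ℕ, ∀ k : ℕ, Nat.Prime k → N ≤ k →
      ∃ r : (ZMod k)ˣ, (∀ u : (ZMod k)ˣ, u ∈ Subgroup.zpowers r) ∧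
        ∃ a : ZMod k, a ≠ 0 ∧ 2 - a ≠ 0 ∧ a * (2 - a)⁻¹ = (r : ZMod k) ∧
          (let q₁ : ZMod k := ((k - 1 : ℕ) : ZMod k) * (-a)⁻¹
           let q₂ : ZMod k := ((k - 1 : ℕ) : ZMod k) * (-(2 - a))⁻¹
           let q₃ : ZMod k := -(q₁ + q₂)
           q₁ ≠ 0 ∧ q₂ ≠ 0 ∧ q₃ ≠ 0 ∧ q₁ ≠ q₂ ∧ q₁ ≠ q₃ ∧ q₂ ≠ q₃) := by
  refine ⟨8, fun k hk hk8 => ?_⟩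
  have : Fact k.Prime := ⟨hk⟩
  have h2 : (2 : ZMod k) ≠ 0 := by exact_mod_cast ZMod.natCast_ne_zero_of_lt two_pos (by omega)
  have h_totient : #({-2, (-2)⁻¹} : Finset (ZMod k)) < φ (Fintype.card (ZMod k)ˣ) :=
    card_le_two.trans_lt (ZMod.card_units k ▸ Nat.three_le_totient (by omega))
  obtain ⟨r, hr, hr_ne⟩ :=
    IsCyclic.exists_orderOf_eq_card_and_notMem (G := (ZMod k)ˣ) Units.val_injective h_totient
  rw [mem_insert, mem_singleton, not_or] at hr_ne
  have hr_sq : (r : ZMod k) ^ 2 ≠ 1 := fun h =>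
    pow_ne_one_of_lt_orderOf two_ne_zero (by rw [hr, ZMod.card_units]; omega)
      (Units.ext (by simp [h]))
  obtain ⟨a, ha2, hax⟩ := exists_mul_inv_two_sub_eq h2 (x := r) fun h => hr_sq (by simp [h])
  have ha : a ≠ 0 := fun h => r.ne_zero (by rw [← hax, h, zero_mul])
  exact ⟨r, mem_zpowers_of_orderOf_eq_card hr, a, ha, ha2, hax,
    q_ne_zero_and_pairwise_ne h2 (ZMod.natCast_ne_zero_of_lt (by omega) (by omega)) ha ha2 hax
      (fun h => hr_sq (by simp [h])) hr_ne.1 hr_ne.2⟩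
end
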